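/- If a ring T is separable over a subring S and S is von Neumann regular, then T is von Neumann regular. -/
import Mathlib


/-! ### Separability of ring extensions -/

universe usep

/-- The families `x y : Fin n → T` represent a separability idempotent
`ω = Σᵢ xᵢ ⊗ yᵢ ∈ T ⊗_S T` for the ring extension `f : S → T`: `Σᵢ xᵢ yᵢ = 1` and
`t ω = ω t` for all `t ∈ T`, where equality of elements of `T ⊗_S T` is expressed
through all `S`-balanced biadditive maps out of `T × T` (the universal property of
the tensor product of the `(T,S)`-bimodule `T` with the `(S,T)`-bimodule `T`). -/
def IsSeparabilityIdempotent {S : Type*} {T : Type usep} [Ring S] [Ring T] (f : S →+* T)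
    {n : ℕ} (x y : Fin n → T) : Prop :=
  (∑ i, x i * y i) = 1 ∧
  ∀ (M : Type usep) [AddCommGroup M] (β : T → T → M),
    (∀ t₁ t₂ u, β (t₁ + t₂) u = β t₁ u + β t₂ u) →
    (∀ t u₁ u₂, β t (u₁ + u₂) = β t u₁ + β t u₂) →
    (∀ (s : S) (t u : T), β (t * f s) u = β t (f s * u)) →
    ∀ t : T, (∑ i, β (t * x i) (y i)) = ∑ i, β (x i) (y i * t)

/-- The ring extension `f : S → T` is separable: there exists a separability
idempotent `ω ∈ T ⊗_S T`. -/
def IsSeparableExtension {S : Type*} {T : Type usep} [Ring S] [Ring T] (f : S →+* T) : Prop :=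
  ∃ (n : ℕ) (x y : Fin n → T), IsSeparabilityIdempotent f x y

/-- A ring is von Neumann regular if for every `a` there is `x` with `a = a x a`. -/
def IsVonNeumannRegularRing (A : Type*) [Ring A] : Prop :=
  ∀ a : A, ∃ x : A, a = a * x * a

namespace VNRSepAux

variable {T : Type*} [Ring T]

/-- The additive subgroup `T·a`. -/
def subI (a : T) : AddSubgroup T where
  carrier := {x | ∃ t, x = t * a}
  zero_mem' := ⟨0, (zero_mul a).symm⟩
  add_mem' := by rintro x y ⟨t, rfl⟩ ⟨u, rfl⟩; exact ⟨t + u, (add_mul t u a).symm⟩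
  neg_mem' := by rintro x ⟨t, rfl⟩; exact ⟨-t, (neg_mul t a).symm⟩

/-- The additive subgroup `a·T·a`. -/
def subJ (a : T) : AddSubgroup T where
  carrier := {x | ∃ t, x = a * t * a}
  zero_mem' := ⟨0, by rw [mul_zero, zero_mul]⟩
  add_mem' := by
    rintro x y ⟨t, rfl⟩ ⟨u, rfl⟩
    exact ⟨t + u, by rw [mul_add, add_mul]⟩
  neg_mem' := by rintro x ⟨t, rfl⟩; exact ⟨-t, by rw [mul_neg, neg_mul]⟩

lemma subI_mul_left {a : T} (t : T) {x : T} (hx : x ∈ subI a) : t * x ∈ subI a := by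
  obtain ⟨d, rfl⟩ := hx
  exact ⟨t * d, (mul_assoc t d a).symm⟩

/-- The quotient module `T / Ta` (as an abelian group). -/
abbrev MQ (a : T) : Type _ := T ⧸ subI a

/-- Quotient map `T → T/Ta`. -/
abbrev piI (a : T) : T →+ MQ a := QuotientAddGroup.mk' (subI a)

/-- Left multiplication by `t` on `T/Ta`. -/
def actL (a t : T) : MQ a →+ MQ a :=
  QuotientAddGroup.lift (subI a) ((piI a).comp (AddMonoidHom.mulLeft t))
    (fun x hx => by
      simpa using (QuotientAddGroup.eq_zero_iff (t * x)).mpr (subI_mul_left t hx))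

@[simp] lemma actL_mk (a t u : T) : actL a t (piI a u) = piI a (t * u) := rfl

end VNRSepAux

namespace VNRSepAux

variable {T : Type*} [Ring T]

/-- `Λ : (T →₀ S) →+ T`, `F ↦ ∑ t * F t`. -/
noncomputable def Lam (S : Subring T) : (T →₀ S) →+ T :=
  Finsupp.liftAddHom (fun t => AddMonoidHom.mk' (fun s : S => t * (s : T))
    (fun s₁ s₂ => by push_cast; rw [mul_add]))

@[simp] lemma Lam_single (S : Subring T) (t : T) (s : S) :
    Lam S (Finsupp.single t s) = t * (s : T) :=
  Finsupp.liftAddHom_apply_single _ t s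

lemma Lam_eq_sum (S : Subring T) (F : T →₀ S) {U : Finset T} (hU : F.support ⊆ U) :
    Lam S F = ∑ t ∈ U, t * ((F t : S) : T) := by
  rw [Lam, Finsupp.liftAddHom_apply]
  exact Finsupp.sum_of_support_subset F hU _ (fun t _ => by simp)

/-- Generating relations for the tensor-product-like group `(T →₀ T/Ta) / K`. -/
def RelSet (S : Subring T) (a : T) : Set (T →₀ MQ a) :=
  {g | ∃ t₁ t₂ m, g = Finsupp.single (t₁ + t₂) m - Finsupp.single t₁ m - Finsupp.single t₂ m} ∪
  {g | ∃ (t : T) (s : S) (m : MQ a),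
    g = Finsupp.single (t * (s : T)) m - Finsupp.single t (actL a (s : T) m)}

/-- An element `g` of `T →₀ T/Ta` "has a presentation with zero relations". -/
def Pred (S : Subring T) (a : T) (g : T →₀ MQ a) : Prop :=
  ∃ (p : ℕ) (t' : Fin p → T) (F : Fin p → (T →₀ S)),
    (∀ j, Lam S (F j) = 0) ∧
    ∀ t : T, g t = piI a (∑ j, ((F j t : S) : T) * t' j)

lemma pred_zero (S : Subring T) (a : T) : Pred S a 0 :=
  ⟨0, Fin.elim0, Fin.elim0, fun j => j.elim0, fun t => by simp⟩

lemma pred_add (S : Subring T) (a : T) {g₁ g₂ : T →₀ MQ a}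
    (h₁ : Pred S a g₁) (h₂ : Pred S a g₂) : Pred S a (g₁ + g₂) := by
  obtain ⟨p₁, t₁, F₁, hF₁, hg₁⟩ := h₁
  obtain ⟨p₂, t₂, F₂, hF₂, hg₂⟩ := h₂
  refine ⟨p₁ + p₂, Fin.append t₁ t₂, Fin.append F₁ F₂, ?_, ?_⟩
  · intro j
    refine Fin.addCases (fun i => ?_) (fun i => ?_) j
    · rw [Fin.append_left]; exact hF₁ i
    · rw [Fin.append_right]; exact hF₂ i
  · intro t
    rw [Finsupp.add_apply, hg₁ t, hg₂ t, ← map_add]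
    congr 1
    rw [Fin.sum_univ_add]
    congr 1
    · exact Finset.sum_congr rfl (fun i _ => by rw [Fin.append_left, Fin.append_left])
    · exact Finset.sum_congr rfl (fun i _ => by rw [Fin.append_right, Fin.append_right])

lemma pred_neg (S : Subring T) (a : T) {g : T →₀ MQ a} (h : Pred S a g) : Pred S a (-g) := by
  obtain ⟨p, t', F, hF, hg⟩ := h
  refine ⟨p, t', fun j => -(F j), fun j => by rw [map_neg, hF j, neg_zero], fun t => ?_⟩
  rw [Finsupp.neg_apply, hg t, ← map_neg]
  congr 1
  rw [← Finset.sum_neg_distrib]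
  exact Finset.sum_congr rfl (fun j _ => by push_cast [Finsupp.neg_apply]; rw [neg_mul])

end VNRSepAux

namespace VNRSepAux

variable {T : Type*} [Ring T]

open Finsupp in
lemma pred_rel (S : Subring T) (a : T) {g : T →₀ MQ a} (hg : g ∈ RelSet S a) :
    Pred S a g := by
  classical
  rcases hg with ⟨t₁, t₂, m, rfl⟩ | ⟨t, s, m, rfl⟩
  · obtain ⟨u, rfl⟩ := QuotientAddGroup.mk'_surjective (subI a) m
    refine ⟨1, fun _ => u,
      fun _ => single (t₁ + t₂) (1 : S) - single t₁ (1 : S) - single t₂ (1 : S), ?_, ?_⟩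
    · intro j
      rw [map_sub, map_sub, Lam_single, Lam_single, Lam_single]
      push_cast
      rw [mul_one, mul_one, mul_one, sub_sub, sub_eq_zero]
    · intro t
      rw [Fin.sum_univ_one]
      simp only [Finsupp.sub_apply, Finsupp.single_apply]
      push_cast [apply_ite (fun s : S => (s : T))]
      split_ifs <;> simp [map_sub, sub_mul, add_mul, map_add, map_neg, neg_mul, one_mul]
  · obtain ⟨u, rfl⟩ := QuotientAddGroup.mk'_surjective (subI a) m
    refine ⟨1, fun _ => u, fun _ => single (t * (s : T)) (1 : S) - single t s, ?_, ?_⟩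
    · intro j
      rw [map_sub, Lam_single, Lam_single]
      push_cast
      rw [mul_one, sub_eq_zero]
    · intro t'
      rw [Fin.sum_univ_one]
      simp only [Finsupp.sub_apply, Finsupp.single_apply, actL_mk]
      push_cast [apply_ite (fun s : S => (s : T))]
      split_ifs <;> simp [map_sub, sub_mul, one_mul, map_add, map_neg]

end VNRSepAux

namespace VNRSepAux

variable {T : Type*} [Ring T]

/-- In a von Neumann regular ring, every finitely generated right ideal has a
left unit which is an idempotent inside the ideal. -/
lemma vnr_idem {A : Type*} [Ring A] (hreg : ∀ a : A, ∃ x : A, a = a * x * a) :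
    ∀ (p : ℕ) (s : Fin p → A),
      ∃ e : A, (∃ r : Fin p → A, e = ∑ i, s i * r i) ∧ e * e = e ∧ ∀ j, e * s j = s j := by
  intro p
  induction p with
  | zero => exact fun s => ⟨0, ⟨Fin.elim0, by simp⟩, by simp, fun j => j.elim0⟩
  | succ p ih =>
    intro s
    obtain ⟨e, ⟨r, he⟩, hee, hfix⟩ := ih (fun i => s i.castSucc)
    obtain ⟨sp, hsp⟩ : ∃ sp, sp = s (Fin.last p) := ⟨_, rfl⟩
    obtain ⟨x, hx⟩ := hreg (sp - e * sp)
    obtain ⟨f, hf⟩ : ∃ f, f = sp - e * sp := ⟨_, rfl⟩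
    rw [← hf] at hx
    obtain ⟨g, hg⟩ : ∃ g, g = f * x := ⟨_, rfl⟩
    obtain ⟨k, hk⟩ : ∃ k, k = e + g - g * e := ⟨_, rfl⟩
    have hef : e * f = 0 := by rw [hf, mul_sub, ← mul_assoc, hee, sub_self]
    have heg : e * g = 0 := by rw [hg, ← mul_assoc, hef, zero_mul]
    have hgg : g * g = g := by
      rw [hg]
      calc f * x * (f * x) = (f * x * f) * x := by noncomm_ring
      _ = f * x := by rw [← hx]
    have hgf : g * f = f := by rw [hg]; exact hx.symm
    have hke : e * k = e := by
      rw [hk, mul_sub, mul_add, hee, heg, ← mul_assoc, heg, zero_mul, add_zero, sub_zero]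
    have hgk : g * k = g := by
      rw [hk, mul_sub, mul_add, hgg, ← mul_assoc, hgg]
      abel
    have hkk : k * k = k := by
      calc k * k = e * k + g * k - g * (e * k) := by rw [hk]; noncomm_ring
      _ = k := by rw [hke, hgk, hk]
    refine ⟨k, ?_, hkk, ?_⟩
    · refine ⟨Fin.snoc (fun i => r i - r i * (sp * x) + r i * (sp * (x * e))) (x - x * e), ?_⟩
      have hsum : ∀ c : A, (∑ i, s i.castSucc * (r i * c)) = e * c := by
        intro c
        rw [he, Finset.sum_mul]
        exact Finset.sum_congr rfl (fun i _ => by rw [mul_assoc])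
      rw [Fin.sum_univ_castSucc]
      simp only [Fin.snoc_castSucc, Fin.snoc_last]
      have expand : ∀ i : Fin p, s i.castSucc *
          (r i - r i * (sp * x) + r i * (sp * (x * e)))
          = s i.castSucc * r i - s i.castSucc * (r i * (sp * x))
            + s i.castSucc * (r i * (sp * (x * e))) := by
        intro i; rw [mul_add, mul_sub]
      rw [Finset.sum_congr rfl (fun i _ => expand i)]
      rw [Finset.sum_add_distrib, Finset.sum_sub_distrib, hsum, hsum, ← he, ← hsp]
      rw [hk, hg, hf]
      noncomm_ring
    · intro j
      refine Fin.lastCases ?_ (fun i => ?_) j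
      · rw [← hsp]
        calc k * sp = e * sp + (g * sp - g * (e * sp)) := by rw [hk]; noncomm_ring
        _ = e * sp + g * f := by rw [← mul_sub, ← hf]
        _ = e * sp + f := by rw [hgf]
        _ = sp := by rw [hf]; abel
      · have h1 : e * s i.castSucc = s i.castSucc := hfix i
        calc k * s i.castSucc
            = e * s i.castSucc + g * s i.castSucc - g * (e * s i.castSucc) := by
              rw [hk]; noncomm_ring
        _ = s i.castSucc := by rw [h1]; abel

end VNRSepAux

namespace VNRSepAux

variable {T : Type*} [Ring T]

lemma coe_sum {S : Subring T} {ι : Type*} (s : Finset ι) (f : ι → S) :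
    ((∑ i ∈ s, f i : S) : T) = ∑ i ∈ s, ((f i : S) : T) :=
  map_sum S.subtype f s

lemma delta_sum {S : Subring T} {p : ℕ} (j : Fin p) (t : Fin p → T) :
    (∑ l, (((if j = l then (1 : S) else 0) : S) : T) * t l) = t j := by
  have h : ∀ l, (((if j = l then (1 : S) else 0) : S) : T) * t l
      = if j = l then t l else 0 := by
    intro l; split_ifs <;> simp
  rw [Finset.sum_congr rfl fun l _ => h l, Finset.sum_ite_eq]
  exact if_pos (Finset.mem_univ j)

lemma swap_mul {A : Type*} [Ring A] {n m : ℕ} (c : Fin n → A) (D : Fin n → Fin m → A)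
    (d : Fin m → A) :
    (∑ j, c j * (∑ l, D j l * d l)) = ∑ l, (∑ j, c j * D j l) * d l := by
  rw [Finset.sum_congr rfl (fun j (_ : j ∈ Finset.univ) => Finset.mul_sum _ _ _)]
  rw [Finset.sum_comm]
  exact Finset.sum_congr rfl (fun l _ => by
    rw [Finset.sum_mul]
    exact Finset.sum_congr rfl (fun j _ => (mul_assoc _ _ _).symm))

lemma swapT {S : Subring T} {n m : ℕ} (C : Fin n → S) (D : Fin n → Fin m → S)
    (t : Fin m → T) :
    (∑ l, (((∑ j, C j * D j l : S)) : T) * t l)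
      = ∑ j, ((C j : S) : T) * (∑ l, ((D j l : S) : T) * t l) := by
  rw [swap_mul (fun j => ((C j : S) : T)) (fun j l => ((D j l : S) : T)) t]
  refine Finset.sum_congr rfl (fun l _ => ?_)
  rw [coe_sum]
  rw [Finset.sum_congr rfl (fun j (_ : j ∈ Finset.univ) => by push_cast; rfl)]

/-- Matrix correction lemma: given finitely many `S`-linear relations on `t'` that
hold modulo `Ta`, there is a matrix `B` over `S` annihilated by all relations with
`t' ≡ B t'` modulo `Ta`. -/
lemma lemF (S : Subring T) (a : T) (hreg : IsVonNeumannRegularRing S) :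
    ∀ (q p : ℕ) (A : Fin q → Fin p → S) (t' : Fin p → T),
      (∀ k, (∑ j, ((A k j : S) : T) * t' j) ∈ subI a) →
      ∃ B : Fin p → Fin p → S, (∀ k l, (∑ j, A k j * B j l) = 0) ∧
        (∀ j, t' j - ∑ l, ((B j l : S) : T) * t' l ∈ subI a) := by
  intro q
  induction q with
  | zero =>
    intro p A t' _
    refine ⟨fun j l => if j = l then 1 else 0, fun k => k.elim0, fun j => ?_⟩
    rw [delta_sum j t', sub_self]
    exact zero_mem _
  | succ q ih =>
    intro p A t' hA
    obtain ⟨e, ⟨ρ, hρ⟩, hee, hfix⟩ := vnr_idem hreg p (fun j => A 0 j)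
    set B₁ : Fin p → Fin p → S := fun j l => (if j = l then 1 else 0) - ρ j * A 0 l with hB₁
    have hB₁row : ∀ l, (∑ j, A 0 j * B₁ j l) = 0 := by
      intro l
      have h1 : ∀ j : Fin p, A 0 j * B₁ j l
          = (if j = l then A 0 j else 0) - A 0 j * ρ j * A 0 l := by
        intro j
        simp only [hB₁]
        rw [mul_sub, mul_ite, mul_one, mul_zero, mul_assoc]
      rw [Finset.sum_congr rfl fun j _ => h1 j, Finset.sum_sub_distrib,
        Finset.sum_ite_eq' Finset.univ l (fun j => A 0 j), if_pos (Finset.mem_univ l),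
        ← Finset.sum_mul, ← hρ, hfix, sub_self]
    have hB₁sum : ∀ j, (∑ l, ((B₁ j l : S) : T) * t' l)
        = t' j - ((ρ j : S) : T) * ∑ l, ((A 0 l : S) : T) * t' l := by
      intro j
      have step : ∀ l, ((B₁ j l : S) : T) * t' l
          = (((if j = l then (1 : S) else 0) : S) : T) * t' l
            - ((ρ j : S) : T) * (((A 0 l : S) : T) * t' l) := by
        intro l
        simp only [hB₁]
        push_cast [apply_ite (fun s : S => (s : T))]
        rw [sub_mul, mul_assoc]
      rw [Finset.sum_congr rfl fun l _ => step l, Finset.sum_sub_distrib, delta_sum,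
        ← Finset.mul_sum]
    have hB₁I : ∀ j, t' j - (∑ l, ((B₁ j l : S) : T) * t' l) ∈ subI a := by
      intro j
      rw [hB₁sum, sub_sub_cancel]
      exact subI_mul_left _ (hA 0)
    -- apply induction hypothesis to the transformed rows
    obtain ⟨B', hB'row, hB'I⟩ := ih p (fun k l => ∑ j, A k.succ j * B₁ j l) t' (by
      intro k
      rw [swapT (fun j => A k.succ j) B₁ t']
      have h4 : ∀ j : Fin p, ((A k.succ j : S) : T) * (∑ l, ((B₁ j l : S) : T) * t' l)
          = ((A k.succ j : S) : T) * t' j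
            - ((A k.succ j : S) : T) * (t' j - ∑ l, ((B₁ j l : S) : T) * t' l) := by
        intro j; rw [mul_sub, sub_sub_cancel]
      rw [Finset.sum_congr rfl (fun j _ => h4 j), Finset.sum_sub_distrib]
      exact sub_mem (hA k.succ) (sum_mem (fun j _ => subI_mul_left _ (hB₁I j))))
    refine ⟨fun j l => ∑ m, B₁ j m * B' m l, ?_, ?_⟩
    · intro k l
      refine Fin.cases ?_ (fun k' => ?_) k
      · rw [swap_mul (fun j => A 0 j) B₁ (fun m => B' m l)]
        rw [Finset.sum_congr rfl (fun m _ => by rw [hB₁row m, zero_mul])]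
        exact Finset.sum_const_zero
      · rw [swap_mul (fun j => A k'.succ j) B₁ (fun m => B' m l)]
        exact hB'row k' l
    · intro j
      rw [swapT (fun m => B₁ j m) B' t']
      have h5 : ∀ m : Fin p, ((B₁ j m : S) : T) * (∑ l, ((B' m l : S) : T) * t' l)
          = ((B₁ j m : S) : T) * t' m
            - ((B₁ j m : S) : T) * (t' m - ∑ l, ((B' m l : S) : T) * t' l) := by
        intro m; rw [mul_sub, sub_sub_cancel]
      rw [Finset.sum_congr rfl (fun m _ => h5 m), Finset.sum_sub_distrib]
      have h6 : ∀ X Y : T, t' j - (X - Y) = (t' j - X) + Y := fun X Y => by abel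
      rw [h6]
      exact add_mem (hB₁I j) (sum_mem (fun m _ => subI_mul_left _ (hB'I m)))

end VNRSepAux

namespace VNRSepAux

variable {T : Type*} [Ring T]

/-- The additive subgroup `a·T`. -/
def subR (a : T) : AddSubgroup T where
  carrier := {x | ∃ z, x = a * z}
  zero_mem' := ⟨0, (mul_zero a).symm⟩
  add_mem' := by rintro x y ⟨t, rfl⟩ ⟨u, rfl⟩; exact ⟨t + u, (mul_add a t u).symm⟩
  neg_mem' := by rintro x ⟨t, rfl⟩; exact ⟨-t, (mul_neg a t).symm⟩

lemma subR_mul_subI {a u w : T} (hu : u ∈ subR a) (hw : w ∈ subI a) :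
    u * w ∈ subJ a := by
  obtain ⟨z, rfl⟩ := hu
  obtain ⟨d, rfl⟩ := hw
  exact ⟨z * d, by rw [mul_assoc, mul_assoc, mul_assoc]⟩

lemma subR_mul_right {a u : T} (hu : u ∈ subR a) (c : T) : u * c ∈ subR a := by
  obtain ⟨z, rfl⟩ := hu
  exact ⟨z * c, mul_assoc a z c⟩

end VNRSepAux

namespace VNRSepAux

end VNRSepAux

/-- If the ring `T` is separable over a subring `S` and `S` is von
Neumann regular, then `T` is von Neumann regular. -/
theorem vonNeumannRegular_over_separable_extension
    {T : Type*} [Ring T] (S : Subring T)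
    (hsep : IsSeparableExtension (S.subtype : S →+* T))
    (hreg : IsVonNeumannRegularRing S) :
    IsVonNeumannRegularRing T := by
  open VNRSepAux in
  classical
  intro a
  obtain ⟨n, x, y, hunit, hcen⟩ := hsep
  set K := AddSubgroup.closure (RelSet S a) with hK
  -- the balanced pairing into (T →₀ T/Ta) / K
  set β : T → T → (T →₀ MQ a) ⧸ K :=
    fun t u => QuotientAddGroup.mk' K (Finsupp.single t (piI a u)) with hβ
  have hb1 : ∀ t₁ t₂ u, β (t₁ + t₂) u = β t₁ u + β t₂ u := by
    intro t₁ t₂ u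
    simp only [hβ, ← map_add]
    refine (QuotientAddGroup.eq_iff_sub_mem).mpr ?_
    rw [sub_add_eq_sub_sub]
    exact AddSubgroup.subset_closure (Or.inl ⟨t₁, t₂, piI a u, rfl⟩)
  have hb2 : ∀ t u₁ u₂, β t (u₁ + u₂) = β t u₁ + β t u₂ := by
    intro t u₁ u₂
    simp only [hβ, map_add, Finsupp.single_add]
  have hb3 : ∀ (s : S) (t u : T), β (t * (S.subtype s)) u = β t ((S.subtype s) * u) := by
    intro s t u
    simp only [hβ]
    refine (QuotientAddGroup.eq_iff_sub_mem).mpr ?_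
    exact AddSubgroup.subset_closure (Or.inr ⟨t, s, piI a u, rfl⟩)
  have hmain := hcen _ β hb1 hb2 hb3 a
  have hR : ∀ i, β (x i) (y i * a) = 0 := by
    intro i
    have h0 : piI a (y i * a) = 0 := (QuotientAddGroup.eq_zero_iff _).mpr ⟨y i, rfl⟩
    simp only [hβ, h0, Finsupp.single_zero, map_zero]
  have hg₀ : (∑ i, Finsupp.single (a * x i) (piI a (y i))) ∈ K := by
    have hz : (∑ i, β (a * x i) (y i)) = 0 := by
      rw [hmain]
      exact Finset.sum_eq_zero fun i _ => hR i
    have hLHS : QuotientAddGroup.mk' K (∑ i, Finsupp.single (a * x i) (piI a (y i)))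
        = ∑ i, β (a * x i) (y i) :=
      map_sum (QuotientAddGroup.mk' K) _ Finset.univ
    exact (QuotientAddGroup.eq_zero_iff _).mp (hLHS.trans hz)
  have hPred : Pred S a (∑ i, Finsupp.single (a * x i) (piI a (y i))) :=
    AddSubgroup.closure_induction (fun g hg => pred_rel S a hg) (pred_zero S a)
      (fun g₁ g₂ _ _ h1 h2 => pred_add S a h1 h2) (fun g _ h => pred_neg S a h) hg₀
  obtain ⟨p, t', F, hF, hpt⟩ := hPred
  -- value function
  set v : T → T := fun t => ∑ j, ((F j t : S) : T) * t' j with hv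
  have hptv : ∀ t : T, (∑ i, if a * x i = t then piI a (y i) else 0) = piI a (v t) := by
    intro t
    rw [← hpt t, Finsupp.finset_sum_apply]
    exact Finset.sum_congr rfl fun i _ => Finsupp.single_apply.symm
  -- the finite set of relevant first components
  set U : Finset T := (Finset.univ.biUnion fun j : Fin p => (F j).support)
      ∪ Finset.image (fun i => a * x i) Finset.univ with hUdef
  have hsupp : ∀ j, (F j).support ⊆ U := by
    intro j
    intro t ht
    rw [hUdef]
    exact Finset.mem_union_left _ (Finset.mem_biUnion.mpr ⟨j, Finset.mem_univ j, ht⟩)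
  have haxU : ∀ i, a * x i ∈ U := by
    intro i
    rw [hUdef]
    exact Finset.mem_union_right _ (Finset.mem_image_of_mem _ (Finset.mem_univ i))
  have hU0 : ∀ j, (∑ t ∈ U, t * ((F j t : S) : T)) = 0 := fun j => by
    rw [← Lam_eq_sum S (F j) (hsupp j), hF j]
  set Pa : T → Prop := fun t => t ∈ subR a with hPa
  set UD := U.filter Pa with hUD
  set UV := U.filter (fun t => ¬ Pa t) with hUV
  -- the partial pairing `t ⊗ m ↦ t * m mod aTa`, defined for `t ∈ aT`
  have hφex : ∀ t : T, t ∈ subR a → ∀ u ∈ subI a,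
      ((QuotientAddGroup.mk' (subJ a)).comp (AddMonoidHom.mulLeft t)) u = 0 := by
    intro t ht u hu
    exact (QuotientAddGroup.eq_zero_iff _).mpr (subR_mul_subI ht hu)
  set φ : T → MQ a →+ T ⧸ subJ a := fun t =>
    if h : t ∈ subR a then
      QuotientAddGroup.lift (subI a)
        ((QuotientAddGroup.mk' (subJ a)).comp (AddMonoidHom.mulLeft t)) (hφex t h)
    else 0 with hφdef
  have hφ : ∀ (t : T), t ∈ subR a → ∀ u : T,
      φ t (piI a u) = QuotientAddGroup.mk' (subJ a) (t * u) := by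
    intro t h u
    simp only [hφdef, dif_pos h]
    rfl
  -- compute X := ∑ t ∈ UD, φ t (piI a (v t)) in two ways
  have way1 : (∑ t ∈ UD, φ t (piI a (v t))) = QuotientAddGroup.mk' (subJ a) a := by
    have e1 : ∀ t ∈ UD, φ t (piI a (v t))
        = ∑ i, if a * x i = t then φ t (piI a (y i)) else 0 := by
      intro t _
      rw [← hptv t, map_sum]
      exact Finset.sum_congr rfl fun i _ => by
        rw [apply_ite (φ t), map_zero]
    rw [Finset.sum_congr rfl e1, Finset.sum_comm]
    have e2 : ∀ i : Fin n, (∑ t ∈ UD, if a * x i = t then φ t (piI a (y i)) else 0)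
        = QuotientAddGroup.mk' (subJ a) ((a * x i) * y i) := by
      intro i
      rw [Finset.sum_ite_eq UD (a * x i) (fun t => φ t (piI a (y i)))]
      have hmem : a * x i ∈ UD := Finset.mem_filter.mpr ⟨haxU i, ⟨x i, rfl⟩⟩
      rw [if_pos hmem]
      exact hφ (a * x i) ⟨x i, rfl⟩ (y i)
    rw [Finset.sum_congr rfl fun i _ => e2 i, ← map_sum]
    congr 1
    calc (∑ i, a * x i * y i) = ∑ i, a * (x i * y i) :=
          Finset.sum_congr rfl fun i _ => mul_assoc a (x i) (y i)
    _ = a * ∑ i, x i * y i := (Finset.mul_sum _ _ _).symm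
    _ = a := by rw [hunit, mul_one]
  have way2 : (∑ t ∈ UD, φ t (piI a (v t)))
      = QuotientAddGroup.mk' (subJ a)
          (∑ j, (∑ t ∈ UD, t * ((F j t : S) : T)) * t' j) := by
    have e1 : ∀ t ∈ UD, φ t (piI a (v t)) = QuotientAddGroup.mk' (subJ a) (t * v t) := by
      intro t ht
      exact hφ t (Finset.mem_filter.mp ht).2 (v t)
    rw [Finset.sum_congr rfl e1, ← map_sum]
    congr 1
    have e2 : ∀ t, t * v t = ∑ j, (t * ((F j t : S) : T)) * t' j := by
      intro t
      rw [hv, Finset.mul_sum]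
      exact Finset.sum_congr rfl fun j _ => (mul_assoc _ _ _).symm
    rw [Finset.sum_congr rfl fun t _ => e2 t, Finset.sum_comm]
    exact Finset.sum_congr rfl fun j _ => (Finset.sum_mul _ _ _).symm
  -- relations on the rows outside `aT`
  have hrow : ∀ t ∈ UV, v t ∈ subI a := by
    intro t ht
    have hnp : ¬ Pa t := (Finset.mem_filter.mp ht).2
    have hzero : piI a (v t) = 0 := by
      rw [← hptv t]
      refine Finset.sum_eq_zero fun i _ => if_neg (fun h : a * x i = t => hnp ?_)
      rw [← h]
      exact ⟨x i, rfl⟩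
    exact (QuotientAddGroup.eq_zero_iff _).mp hzero
  obtain ⟨B, hBrow, hBI⟩ := lemF S a hreg UV.card p
    (fun k j => F j ((UV.equivFin.symm k) : T)) t'
    (fun k => hrow _ (UV.equivFin.symm k).2)
  have hBrow' : ∀ t ∈ UV, ∀ l, (∑ j, F j t * B j l) = 0 := by
    intro t ht l
    have := hBrow (UV.equivFin ⟨t, ht⟩) l
    rwa [Equiv.symm_apply_apply] at this
  -- the coefficients vD j lie in aT and sum against t' into aTa
  set vD : Fin p → T := fun j => ∑ t ∈ UD, t * ((F j t : S) : T) with hvD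
  have hvDmem : ∀ j, vD j ∈ subR a := by
    intro j
    exact sum_mem fun t ht => subR_mul_right (Finset.mem_filter.mp ht).2 _
  have hvDneg : ∀ j, vD j = -∑ t ∈ UV, t * ((F j t : S) : T) := by
    intro j
    have := Finset.sum_filter_add_sum_filter_not U Pa (fun t => t * ((F j t : S) : T))
    rw [hU0 j] at this
    rw [hvD]
    rw [eq_neg_iff_add_eq_zero]
    exact this
  have hfinal : (∑ j, vD j * t' j) ∈ subJ a := by
    have split : ∀ j, vD j * t' j
        = vD j * (t' j - ∑ l, ((B j l : S) : T) * t' l)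
          + vD j * (∑ l, ((B j l : S) : T) * t' l) := by
      intro j; rw [mul_sub, sub_add_cancel]
    rw [Finset.sum_congr rfl fun j _ => split j, Finset.sum_add_distrib]
    refine add_mem (sum_mem fun j _ => subR_mul_subI (hvDmem j) (hBI j)) ?_
    have hzero : (∑ j, vD j * (∑ l, ((B j l : S) : T) * t' l)) = 0 := by
      rw [swap_mul vD (fun j l => ((B j l : S) : T)) t']
      refine Finset.sum_eq_zero fun l _ => ?_
      have hcoef : (∑ j, vD j * ((B j l : S) : T)) = 0 := by
        rw [Finset.sum_congr rfl fun j (_ : j ∈ Finset.univ) => by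
          rw [hvDneg j, neg_mul, Finset.sum_mul]]
        rw [Finset.sum_neg_distrib, neg_eq_zero, Finset.sum_comm]
        refine Finset.sum_eq_zero fun t ht => ?_
        have : (∑ j, ((F j t : S) : T) * ((B j l : S) : T))
            = ((∑ j, F j t * B j l : S) : T) := by
          rw [coe_sum]
          exact Finset.sum_congr rfl fun j _ => by push_cast; rfl
        rw [Finset.sum_congr rfl fun j (_ : j ∈ Finset.univ) => mul_assoc t _ _,
          ← Finset.mul_sum, this, hBrow' t ht l]
        push_cast
        rw [mul_zero]
      rw [hcoef, zero_mul]
    rw [hzero]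
    exact zero_mem _
  have : QuotientAddGroup.mk' (subJ a) a = 0 := by
    rw [← way1, way2]
    exact (QuotientAddGroup.eq_zero_iff _).mpr hfinal
  obtain ⟨z, hz⟩ := (QuotientAddGroup.eq_zero_iff _).mp this
  exact ⟨z, hz⟩
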